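/- arXiv:1502.03216 — 4 statements merged into one kernel-verified Lean document; each statement's English description precedes it below -/
import Mathlib

section
/- For an untyped deterministic calculus with a set 𝒬 of expression functions, the 𝒬-experiment operator F is lower-continuous with respect to countably infinite descending chains: for every chain of binary relations η1 ⊇ η2 ⊇ η3 ⊇ … on expressions, F(⋂_{i=1}^∞ ηi) = ⋂_{i=1}^∞ F(ηi). -/
/-! Untyped deterministic calculi (Schmidt-Schauß, Sabel, Machkasova):
an untyped deterministic calculus consists of expressions `E`, a deterministic
small-step reduction given as a partial function `step`, a set `Ans` of answers
(each irreducible), and a set `Q` of functions on expressions. -/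

universe u

structure UDC : Type (u+1) where
  E : Type u
  step : E → Option E
  Ans : Set E
  ans_irred : ∀ a ∈ Ans, step a = none
  Q : Set (E → E)

namespace UDC

variable (D : UDC)

/-- one-step reduction relation -/
def Red (s t : D.E) : Prop := D.step s = some t

/-- `s` converges to the answer `v` -/
def convTo (s v : D.E) : Prop := Relation.ReflTransGen D.Red s v ∧ v ∈ D.Ans

/-- `s` converges -/
def conv (s : D.E) : Prop := ∃ v, D.convTo s v

/-- the `Q`-experiment operator on binary relations on expressions -/
def F (η : D.E → D.E → Prop) (s t : D.E) : Prop :=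
  ∀ v1, D.convTo s v1 → ∃ v2, D.convTo t v2 ∧ ∀ Qf ∈ D.Q, η (Qf v1) (Qf v2)

/-- greatest fixpoint of a (monotone) operator on relations:
the union of all post-fixed points -/
def gfpRel {α : Type u} (F : (α → α → Prop) → (α → α → Prop)) (a b : α) : Prop :=
  ∃ η, (∀ x y, η x y → F η x y) ∧ η a b

/-- `Q`-similarity: the greatest fixpoint of the experiment operator -/
def sim : D.E → D.E → Prop := gfpRel D.F

/-- `Q1 (Q2 (… (Qn s)))` -/
def applyAll (l : List (D.E → D.E)) (s : D.E) : D.E := l.foldr (fun f e => f e) s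

/-- the inductively defined preorder `≤_Q` -/
def leQ (s t : D.E) : Prop :=
  ∀ l : List (D.E → D.E), (∀ f ∈ l, f ∈ D.Q) →
    D.conv (D.applyAll l s) → D.conv (D.applyAll l t)

/-- convergence admissibility w.r.t. `Q` -/
def admissible : Prop :=
  ∀ f ∈ D.Q, ∀ s v, D.convTo (f s) v ↔ ∃ v', D.convTo s v' ∧ D.convTo (f v') v

end UDC

/-- The `Q`-experiment operator is lower-continuous w.r.t. countably
infinite descending chains: `F (⋂ i, η i) = ⋂ i, F (η i)`. -/
theorem experiment_operator_lower_continuous (D : UDC) (η : ℕ → (D.E → D.E → Prop))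
    (hchain : ∀ i, ∀ a b, η (i + 1) a b → η i a b) :
    ∀ a b, D.F (fun x y => ∀ i, η i x y) a b ↔ (∀ i, D.F (η i) a b) := by
  have huniq : ∀ s v1 v2, D.convTo s v1 → D.convTo s v2 → v1 = v2 := by
    intro s v1 v2 h1 h2
    obtain ⟨r1, a1⟩ := h1
    obtain ⟨r2, a2⟩ := h2
    induction r1 using Relation.ReflTransGen.head_induction_on with
    | refl =>
      cases r2.cases_head with
      | inl h => exact h
      | inr h =>
        obtain ⟨c, hc, _⟩ := h
        exact absurd hc (by simp [UDC.Red, D.ans_irred v1 a1])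
    | head hstep _ ih =>
      rename_i x y _
      cases r2.cases_head with
      | inl h =>
        subst h
        exact absurd hstep (by simp [UDC.Red, D.ans_irred _ a2])
      | inr h =>
        obtain ⟨c, hc, hr⟩ := h
        have : y = c := Option.some_injective _ (hstep.symm.trans hc)
        subst this
        exact ih hr
  intro a b
  constructor
  · intro h i v1 hv1
    obtain ⟨v2, hv2, hq⟩ := h v1 hv1
    exact ⟨v2, hv2, fun Qf hQf => hq Qf hQf i⟩
  · intro h v1 hv1
    obtain ⟨v2, hv2, hq⟩ := h 0 v1 hv1
    refine ⟨v2, hv2, fun Qf hQf i => ?_⟩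
    obtain ⟨v2', hv2', hq'⟩ := h i v1 hv1
    rw [huniq b v2 v2' hv2 hv2']
    exact hq' Qf hQf
end

section
/- For an untyped deterministic calculus with a set 𝒬 of expression functions, define the descending sequence of relations ≼_0 = E × E and ≼_{i+1} = F(≼_i) for i ≥ 0, where F is the 𝒬-experiment operator. Then 𝒬-similarity, i.e. the greatest fixpoint ≼ of F, equals the intersection ⋂_{i=0}^∞ ≼_i. -/
/-! Untyped deterministic calculi (Schmidt-Schauß, Sabel, Machkasova):
an untyped deterministic calculus consists of expressions `E`, a deterministic
small-step reduction given as a partial function `step`, a set `Ans` of answers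
(each irreducible), and a set `Q` of functions on expressions. -/

universe u

/-- the descending approximation sequence: `≼_0 = E × E`, `≼_{i+1} = F (≼_i)` -/
def UDC.simIter (D : UDC) : ℕ → (D.E → D.E → Prop)
  | 0 => fun _ _ => True
  | (i + 1) => D.F (D.simIter i)

lemma UDC.red_det (D : UDC) {s t t' : D.E} (h : D.Red s t) (h' : D.Red s t') : t = t' := by
  unfold UDC.Red at h h'; rw [h] at h'; exact Option.some.inj h'

lemma UDC.convTo_unique (D : UDC) {s v v' : D.E} (h : D.convTo s v) (h' : D.convTo s v') :
    v = v' := by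
  obtain ⟨h1, h2⟩ := h
  induction h1 using Relation.ReflTransGen.head_induction_on with
  | refl =>
    rcases Relation.ReflTransGen.cases_head h'.1 with rfl | ⟨c, hc, _⟩
    · rfl
    · exact absurd hc (by unfold UDC.Red; rw [D.ans_irred _ h2]; simp)
  | head hab _ ih =>
    rcases Relation.ReflTransGen.cases_head h'.1 with rfl | ⟨c, hc, hc'⟩
    · exact absurd hab (by unfold UDC.Red; rw [D.ans_irred _ h'.2]; simp)
    · exact ih ⟨D.red_det hc hab ▸ hc', h'.2⟩

lemma UDC.F_mono (D : UDC) {η η' : D.E → D.E → Prop} (h : ∀ x y, η x y → η' x y) :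
    ∀ x y, D.F η x y → D.F η' x y := by
  intro x y hf v1 hv1
  obtain ⟨v2, hv2, hq⟩ := hf v1 hv1
  exact ⟨v2, hv2, fun Qf hQf => h _ _ (hq Qf hQf)⟩

lemma UDC.sim_postfixed (D : UDC) : ∀ x y, D.sim x y → D.F D.sim x y := by
  intro x y ⟨η, hpost, hxy⟩
  exact D.F_mono (fun a b hab => ⟨η, hpost, hab⟩) x y (hpost x y hxy)

/-- `Q`-similarity (the greatest fixpoint of the experiment operator)
equals the intersection of the descending approximation sequence. -/
theorem similarity_eq_iInter_simIter (D : UDC) :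
    ∀ a b, D.sim a b ↔ (∀ i, D.simIter i a b) := by
  intro a b
  constructor
  · intro h i
    induction i generalizing a b with
    | zero => trivial
    | succ n ih => exact D.F_mono (fun x y => ih x y) a b (D.sim_postfixed a b h)
  · intro h
    refine ⟨fun x y => ∀ i, D.simIter i x y, ?_, h⟩
    intro x y hxy v1 hv1
    obtain ⟨v2, hv2, _⟩ := hxy 1 v1 hv1
    refine ⟨v2, hv2, fun Qf hQf i => ?_⟩
    obtain ⟨v2', hv2', hq⟩ := hxy (i + 1) v1 hv1
    rw [D.convTo_unique hv2 hv2'] at *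
    exact hq Qf hQf
end

section
/- Let an untyped deterministic calculus be convergence-admissible with respect to 𝒬. Then: (1) for all expressions s1, s2 and every Q ∈ 𝒬, s1 ≤_𝒬 s2 implies Q(s1) ≤_𝒬 Q(s2); and (2) if s1 ≤_𝒬 s2, s1 ↓ v1 and s2 ↓ v2, then v1 ≤_𝒬 v2. -/
/-! Untyped deterministic calculi (Schmidt-Schauß, Sabel, Machkasova):
an untyped deterministic calculus consists of expressions `E`, a deterministic
small-step reduction given as a partial function `step`, a set `Ans` of answers
(each irreducible), and a set `Q` of functions on expressions. -/

universe u

lemma UDC.conv_det (D : UDC) {s v w : D.E} (h1 : D.convTo s v) (h2 : D.convTo s w) : v = w := by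
  obtain ⟨r1, a1⟩ := h1
  obtain ⟨r2, a2⟩ := h2
  induction r1 using Relation.ReflTransGen.head_induction_on with
  | refl =>
    rcases r2.cases_head with h | ⟨c, hc, _⟩
    · exact h
    · exact absurd hc (by simp [UDC.Red, D.ans_irred _ a1])
  | head hst _ ih =>
    rcases r2.cases_head with h | ⟨c, hc, hcw⟩
    · subst h; exact absurd hst (by simp [UDC.Red, D.ans_irred _ a2])
    · have : _ = c := Option.some_injective _ ((Eq.symm (hst : D.step _ = _)).trans hc)
      subst this; exact ih hcw

lemma UDC.convTo_applyAll (D : UDC) (hadm : D.admissible) {s v : D.E} (hsv : D.convTo s v)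
    (l : List (D.E → D.E)) (hl : ∀ f ∈ l, f ∈ D.Q) (w : D.E) :
    D.convTo (D.applyAll l s) w ↔ D.convTo (D.applyAll l v) w := by
  induction l generalizing w with
  | nil =>
    show D.convTo s w ↔ D.convTo v w
    constructor
    · intro h
      have := D.conv_det hsv h
      subst this
      exact ⟨Relation.ReflTransGen.refl, h.2⟩
    · intro h
      exact ⟨hsv.1.trans h.1, h.2⟩
  | cons f l ih =>
    have hf := hl f (by simp)
    have hl' : ∀ g ∈ l, g ∈ D.Q := fun g hg => hl g (by simp [hg])
    show D.convTo (f (D.applyAll l s)) w ↔ D.convTo (f (D.applyAll l v)) w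
    rw [hadm f hf, hadm f hf]
    exact exists_congr fun v' => and_congr_left fun _ => ih hl' v'

lemma UDC.applyAll_append (D : UDC) (l : List (D.E → D.E)) (f : D.E → D.E) (s : D.E) :
    D.applyAll (l ++ [f]) s = D.applyAll l (f s) := by
  simp [UDC.applyAll]

/-- In a convergence-admissible calculus, (1) the inductive preorder
`≤_Q` respects the functions in `Q`, and (2) it is preserved when passing to the
respective answers of converging expressions. -/
theorem leQ_respects_Q_and_values (D : UDC) (hadm : D.admissible) :
    (∀ f ∈ D.Q, ∀ s1 s2, D.leQ s1 s2 → D.leQ (f s1) (f s2)) ∧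
    (∀ s1 s2 v1 v2, D.leQ s1 s2 → D.convTo s1 v1 → D.convTo s2 v2 → D.leQ v1 v2) := by
  constructor
  · intro f hf s1 s2 h l hl hc
    rw [← D.applyAll_append l f] at hc ⊢
    refine h (l ++ [f]) ?_ hc
    intro g hg
    rcases List.mem_append.1 hg with h' | h'
    · exact hl g h'
    · simpa using (List.mem_singleton.1 h') ▸ hf
  · intro s1 s2 v1 v2 h h1 h2 l hl hc
    obtain ⟨w, hw⟩ := hc
    have hc1 : D.conv (D.applyAll l s1) := ⟨w, (D.convTo_applyAll hadm h1 l hl w).2 hw⟩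
    obtain ⟨w', hw'⟩ := h l hl hc1
    exact ⟨w', (D.convTo_applyAll hadm h2 l hl w').1 hw'⟩
end

section
/- Let an untyped deterministic calculus be convergence-admissible with respect to 𝒬. Then the inductively defined preorder and 𝒬-similarity coincide: ≤_𝒬 = ≼, i.e. for all expressions s1, s2, s1 ≤_𝒬 s2 if and only if s1 ≼ s2. -/
/-! Untyped deterministic calculi (Schmidt-Schauß, Sabel, Machkasova):
an untyped deterministic calculus consists of expressions `E`, a deterministic
small-step reduction given as a partial function `step`, a set `Ans` of answers
(each irreducible), and a set `Q` of functions on expressions. -/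

universe u

/-! Determinism makes the answer of an expression unique, and admissibility then makes
convergence of `Q₁ (… (Qₙ s))` depend on `s` only through its answer. Hence `≤_Q` is a
post-fixed point of `F` and lies below the greatest one, `≼`. Conversely, unfolding `≼`
once per experiment, by induction on the stack `Q₁, …, Qₙ`, shows that `s₁ ≼ s₂` carries
convergence of `Q₁ (… (Qₙ s₁))` over to `Q₁ (… (Qₙ s₂))`. -/

namespace UDC

theorem gfpRel_postfix {α : Type u} {F : (α → α → Prop) → (α → α → Prop)}
    (hF : Monotone F) {a b : α} (h : gfpRel F a b) : F (gfpRel F) a b := by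
  obtain ⟨η, hη, hab⟩ := h
  exact hF (fun x y hxy => ⟨η, hη, hxy⟩) a b (hη a b hab)

variable {D : UDC}

theorem red_rightUnique : Relator.RightUnique D.Red :=
  fun _ _ _ h₁ h₂ => Option.some.inj (h₁.symm.trans h₂)

theorem convTo_of_mem_Ans_iff {v x : D.E} (hv : v ∈ D.Ans) : D.convTo v x ↔ x = v := by
  have hirred : ∀ y, ¬ D.Red v y := by simp [Red, D.ans_irred v hv]
  rw [convTo, Relation.reflTransGen_iff_eq hirred]
  exact ⟨And.left, fun h => ⟨h, h ▸ hv⟩⟩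

theorem convTo_unique_s5 {s v w : D.E} (hv : D.convTo s v) (hw : D.convTo s w) : w = v := by
  rcases hv.1.total_of_right_unique red_rightUnique hw.1 with h | h
  · exact (convTo_of_mem_Ans_iff hv.2).1 ⟨h, hw.2⟩
  · exact ((convTo_of_mem_Ans_iff hw.2).1 ⟨h, hv.2⟩).symm

theorem convTo_iff_of_convTo {s v : D.E} (hsv : D.convTo s v) (x : D.E) :
    D.convTo s x ↔ D.convTo v x := by
  rw [convTo_of_mem_Ans_iff hsv.2]
  exact ⟨convTo_unique_s5 hsv, fun h => h ▸ hsv⟩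

theorem F_mono_s5 : Monotone D.F :=
  fun _ _ h _ _ hst v hv =>
    (hst v hv).imp fun _ ⟨hw, hQ⟩ => ⟨hw, fun Qf hQf => h _ _ (hQ Qf hQf)⟩

@[simp]
theorem applyAll_cons (f : D.E → D.E) (l : List (D.E → D.E)) (s : D.E) :
    D.applyAll (f :: l) s = f (D.applyAll l s) := rfl

theorem applyAll_append_singleton (l : List (D.E → D.E)) (f : D.E → D.E) (s : D.E) :
    D.applyAll (l ++ [f]) s = D.applyAll l (f s) := by
  simp [applyAll, List.foldr_append]

theorem convTo_applyAll_iff_of_convTo (hadm : D.admissible) {l : List (D.E → D.E)}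
    (hl : ∀ f ∈ l, f ∈ D.Q) {s v : D.E} (hsv : D.convTo s v) (x : D.E) :
    D.convTo (D.applyAll l s) x ↔ D.convTo (D.applyAll l v) x := by
  induction l generalizing x with
  | nil => exact convTo_iff_of_convTo hsv x
  | cons f l ih =>
    have hf : f ∈ D.Q := hl f List.mem_cons_self
    have ih := ih fun g hg => hl g (List.mem_cons_of_mem f hg)
    simp only [applyAll_cons]
    rw [hadm f hf _ x, hadm f hf _ x]
    simp only [ih]

theorem leQ_postfix (hadm : D.admissible) {s t : D.E} (hst : D.leQ s t) : D.F D.leQ s t := by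
  intro v hv
  obtain ⟨w, hw⟩ := hst [] (by simp) ⟨v, hv⟩
  refine ⟨w, hw, fun Qf hQf l hl ⟨a, ha⟩ => ?_⟩
  have hlQ : ∀ f ∈ l ++ [Qf], f ∈ D.Q := by
    simpa [or_imp, forall_and] using And.intro hl hQf
  rw [← applyAll_append_singleton] at ha ⊢
  obtain ⟨b, hb⟩ := hst _ hlQ ⟨a, (convTo_applyAll_iff_of_convTo hadm hlQ hv a).2 ha⟩
  exact ⟨b, (convTo_applyAll_iff_of_convTo hadm hlQ hw b).1 hb⟩

theorem sim_applyAll (hadm : D.admissible) {l : List (D.E → D.E)} (hl : ∀ f ∈ l, f ∈ D.Q)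
    {s t : D.E} (hst : D.sim s t) {v : D.E} (hv : D.convTo (D.applyAll l s) v) :
    ∃ w, D.convTo (D.applyAll l t) w ∧ ∀ Qf ∈ D.Q, D.sim (Qf v) (Qf w) := by
  induction l generalizing v with
  | nil => exact gfpRel_postfix F_mono_s5 hst v hv
  | cons f l ih =>
    have hf : f ∈ D.Q := hl f List.mem_cons_self
    obtain ⟨v', hv', hfv⟩ := (hadm f hf _ v).1 hv
    obtain ⟨w', hw', hQ⟩ := ih (fun g hg => hl g (List.mem_cons_of_mem f hg)) hv'
    obtain ⟨w, hw, hQw⟩ := gfpRel_postfix F_mono_s5 (hQ f hf) v hfv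
    exact ⟨w, (hadm f hf _ w).2 ⟨w', hw', hw⟩, hQw⟩

theorem leQ_of_sim (hadm : D.admissible) {s t : D.E} (hst : D.sim s t) : D.leQ s t :=
  fun _ hl ⟨_, hv⟩ => (sim_applyAll hadm hl hst hv).imp fun _ => And.left

end UDC

/-- In a convergence-admissible calculus, the inductively defined
preorder `≤_Q` and `Q`-similarity coincide. -/
theorem leQ_eq_sim (D : UDC) (hadm : D.admissible) :
    ∀ s1 s2, D.leQ s1 s2 ↔ D.sim s1 s2 :=
  fun _ _ => ⟨fun h => ⟨D.leQ, fun _ _ => UDC.leQ_postfix hadm, h⟩, UDC.leQ_of_sim hadm⟩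
end
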